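/- arXiv:2012.03582 — 2 statements merged into one kernel-verified Lean document; each statement's English description precedes it below -/
import Mathlib

section
/- Let (u, v) be an unmatched bridge with tenacity(u, v) <= l_m where both u and v are outer vertices. Then evenlevel(u) = evenlevel(v), and tenacity(u) = tenacity(v) = tenacity(u, v). -/
open scoped Classical

universe u

variable {V : Type u}

/-- A finite-or-infinite undirected graph together with a matching. -/
structure MatchedGraph (V : Type u) where
  adj : V → V → Prop
  symm : ∀ u v, adj u v → adj v u
  loopless : ∀ v, ¬ adj v v
  M : V → V → Prop
  M_symm : ∀ u v, M u v → M v u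
  M_sub : ∀ u v, M u v → adj u v
  M_matching : ∀ u v w, M u v → M u w → v = w

namespace MatchedGraph

/-- A vertex is unmatched if no matched edge is incident to it. -/
def unmatched (g : MatchedGraph V) (v : V) : Prop := ∀ u, ¬ g.M v u

/-- `p` is a simple alternating path starting at `b` and ending at `v`,
whose first edge is unmatched and whose edges alternate unmatched/matched.
(The `i`-th edge is matched iff `i` is odd.) -/
def AltPath (g : MatchedGraph V) (p : List V) (b v : V) : Prop :=
  p.head? = some b ∧ p.getLast? = some v ∧ p.Nodup ∧
  ∀ i, i + 1 < p.length →
    g.adj (p.getD i b) (p.getD (i + 1) b) ∧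
      (g.M (p.getD i b) (p.getD (i + 1) b) ↔ i % 2 = 1)

/-- An alternating path from an *unmatched* vertex `f` to `v`. -/
def AltPathFrom (g : MatchedGraph V) (p : List V) (f v : V) : Prop :=
  g.unmatched f ∧ g.AltPath p f v

/-- Minimum length of an even alternating path from an unmatched vertex to `v`. -/
noncomputable def evenlevel (g : MatchedGraph V) (v : V) : ℕ∞ :=
  sInf {n : ℕ∞ | ∃ p f, g.AltPathFrom p f v ∧ Even (p.length - 1) ∧
    n = ((p.length - 1 : ℕ) : ℕ∞)}

/-- Minimum length of an odd alternating path from an unmatched vertex to `v`. -/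
noncomputable def oddlevel (g : MatchedGraph V) (v : V) : ℕ∞ :=
  sInf {n : ℕ∞ | ∃ p f, g.AltPathFrom p f v ∧ Odd (p.length - 1) ∧
    n = ((p.length - 1 : ℕ) : ℕ∞)}

noncomputable def tenacity (g : MatchedGraph V) (v : V) : ℕ∞ :=
  g.evenlevel v + g.oddlevel v

noncomputable def minlevel (g : MatchedGraph V) (v : V) : ℕ∞ :=
  min (g.evenlevel v) (g.oddlevel v)

noncomputable def maxlevel (g : MatchedGraph V) (v : V) : ℕ∞ :=
  max (g.evenlevel v) (g.oddlevel v)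

/-- Minimum length of an augmenting path: an alternating path between two
distinct unmatched vertices. -/
noncomputable def lm (g : MatchedGraph V) : ℕ∞ :=
  sInf {n : ℕ∞ | ∃ p f v, g.AltPathFrom p f v ∧ g.unmatched v ∧ f ≠ v ∧
    n = ((p.length - 1 : ℕ) : ℕ∞)}

/-- Minimum tenacity of any vertex. -/
noncomputable def tm (g : MatchedGraph V) : ℕ∞ := ⨅ v, g.tenacity v

/-- `p` is an `evenlevel(v)` path starting at the unmatched vertex `f`. -/
def IsEvenlevelPath (g : MatchedGraph V) (p : List V) (f v : V) : Prop :=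
  g.AltPathFrom p f v ∧ Even (p.length - 1) ∧
    ((p.length - 1 : ℕ) : ℕ∞) = g.evenlevel v

/-- `p` is an `oddlevel(v)` path starting at the unmatched vertex `f`. -/
def IsOddlevelPath (g : MatchedGraph V) (p : List V) (f v : V) : Prop :=
  g.AltPathFrom p f v ∧ Odd (p.length - 1) ∧
    ((p.length - 1 : ℕ) : ℕ∞) = g.oddlevel v

/-- `p` is a `minlevel(v)` path starting at the unmatched vertex `f`. -/
def IsMinlevelPath (g : MatchedGraph V) (p : List V) (f v : V) : Prop :=
  g.AltPathFrom p f v ∧ ((p.length - 1 : ℕ) : ℕ∞) = g.minlevel v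

/-- `p` is a `maxlevel(v)` path starting at the unmatched vertex `f`. -/
def IsMaxlevelPath (g : MatchedGraph V) (p : List V) (f v : V) : Prop :=
  g.AltPathFrom p f v ∧ ((p.length - 1 : ℕ) : ℕ∞) = g.maxlevel v

/-- The vertex at position `i` of `p` (whose prefix from `f` has length `i`)
is BFS-honest w.r.t. `p`. -/
def BFSHonest (g : MatchedGraph V) (p : List V) (f : V) (i : ℕ) : Prop :=
  (Even i → g.evenlevel (p.getD i f) = (i : ℕ∞)) ∧
  (Odd i → g.oddlevel (p.getD i f) = (i : ℕ∞))

/-- `u` is a predecessor of `v`: `(u, v)` is the last edge of some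
`minlevel(v)` path. -/
def IsPred (g : MatchedGraph V) (u v : V) : Prop :=
  ∃ p f, g.IsMinlevelPath p f v ∧ 2 ≤ p.length ∧ p.getD (p.length - 2) f = u

/-- A prop is an edge which is the last edge of a minlevel path to one of its
endpoints. -/
def IsPropEdge (g : MatchedGraph V) (u v : V) : Prop :=
  g.IsPred u v ∨ g.IsPred v u

/-- A bridge is an edge that is not a prop. -/
def IsBridge (g : MatchedGraph V) (u v : V) : Prop :=
  g.adj u v ∧ ¬ g.IsPropEdge u v

/-- Tenacity of an edge. -/
noncomputable def etenacity (g : MatchedGraph V) (u v : V) : ℕ∞ :=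
  if g.M u v then g.oddlevel u + g.oddlevel v + 1
  else g.evenlevel u + g.evenlevel v + 1

/-- The set `B(v)` of all `F(p, v)`: for each `evenlevel(v)` or `oddlevel(v)`
path `p`, the vertex on `p` farthest from the unmatched endpoint among the
vertices of tenacity greater than `tenacity(v)`. -/
def Bset (g : MatchedGraph V) (v : V) : Set V :=
  {b | ∃ p f i, (g.IsEvenlevelPath p f v ∨ g.IsOddlevelPath p f v) ∧
    i < p.length ∧ b = p.getD i f ∧ g.tenacity v < g.tenacity b ∧
    ∀ k, i < k → k < p.length → g.tenacity (p.getD k f) ≤ g.tenacity v}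

/-- `b` is the (unique) base of `v`. -/
def baseOf (g : MatchedGraph V) (v b : V) : Prop := g.Bset v = {b}

/-- Iterated bases: `iterBase k v b` means `b = base^k(v)` (with `base^0(v) = v`). -/
def iterBase (g : MatchedGraph V) : ℕ → V → V → Prop
  | 0, v, b => v = b
  | k + 1, v, b => ∃ u, g.iterBase k v u ∧ g.baseOf u b

/-- A vertex is outer if `evenlevel(v) < oddlevel(v)`. -/
def IsOuter (g : MatchedGraph V) (v : V) : Prop := g.evenlevel v < g.oddlevel v

/-- A vertex is inner if it is not outer. -/
def IsInner (g : MatchedGraph V) (v : V) : Prop := g.oddlevel v ≤ g.evenlevel v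

/-- The set `S_{b,t}` of vertices of tenacity `t` with base `b`. -/
def Sset (g : MatchedGraph V) (t : ℕ) (b : V) : Set V :=
  {v | g.tenacity v = (t : ℕ∞) ∧ g.baseOf v b}

/-- The blossom `B_{b,t}`, defined recursively. -/
def blossom (g : MatchedGraph V) : ℕ → V → Set V
  | 0, _ => ∅
  | 1, _ => ∅
  | t + 2, b => g.Sset (t + 2) b ∪
      ⋃ v ∈ {v | (v ∈ g.Sset (t + 2) b ∨ v = b) ∧ g.IsOuter v}, blossom g t v

/-- The nesting depth `N(B_{b,t})` of a blossom. -/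
noncomputable def ndepth (g : MatchedGraph V) [Fintype V] : ℕ → V → ℕ
  | 0, _ => 0
  | 1, _ => 0
  | t + 2, b =>
    if (g.Sset (t + 2) b).Nonempty then
      1 + Finset.univ.sup (fun v =>
        if (v ∈ g.Sset (t + 2) b ∨ v = b) ∧ g.IsOuter v then ndepth g t v else 0)
    else ndepth g t b

/-- `evenlevel(b; v)`: minimum even length of an alternating path from `b` to
`v` starting with an unmatched edge. -/
noncomputable def evenlevelFrom (g : MatchedGraph V) (b v : V) : ℕ∞ :=
  sInf {n : ℕ∞ | ∃ p, g.AltPath p b v ∧ Even (p.length - 1) ∧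
    n = ((p.length - 1 : ℕ) : ℕ∞)}

/-- `oddlevel(b; v)`: minimum odd length of an alternating path from `b` to
`v` starting with an unmatched edge. -/
noncomputable def oddlevelFrom (g : MatchedGraph V) (b v : V) : ℕ∞ :=
  sInf {n : ℕ∞ | ∃ p, g.AltPath p b v ∧ Odd (p.length - 1) ∧
    n = ((p.length - 1 : ℕ) : ℕ∞)}

end MatchedGraph

/-!
Let `(u, v)` be an unmatched edge. If `v` is outer, then `evenlevel v ≤ evenlevel u`: either `v`
lies on an `evenlevel(u)` path, and its prefix is an alternating path to `v` shorter than
`evenlevel u`, which for an outer vertex bounds `evenlevel v`; or the path extends by the edge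
`(u, v)` to an odd path of length `evenlevel u + 1`, and `evenlevel v < oddlevel v` for outer `v`.
With both endpoints outer the evenlevels agree, the second case is forced, and
`oddlevel v = evenlevel u + 1`. All tenacities are then `2 · evenlevel u + 1`.
-/

namespace MatchedGraph

variable {g : MatchedGraph V} {p : List V} {b f u v w : V}

theorem AltPath.getD_length_sub_one (h : g.AltPath p b v) : p.getD (p.length - 1) b = v := by
  rw [List.getD_eq_getElem?_getD, ← List.getLast?_eq_getElem?, h.2.1, Option.getD_some]

theorem AltPath.take (h : g.AltPath p b v) {j : ℕ} (hj : j < p.length) :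
    g.AltPath (p.take (j + 1)) b (p.getD j b) := by
  obtain ⟨hhead, -, hnodup, hedges⟩ := h
  have hlen : (p.take (j + 1)).length = j + 1 := by rw [List.length_take]; omega
  have hgetD : ∀ i, i < j + 1 → (p.take (j + 1)).getD i b = p.getD i b := by
    intro i hi
    rw [List.getD_eq_getElem?_getD, List.getD_eq_getElem?_getD, List.getElem?_take, if_pos hi]
  refine ⟨?_, ?_, hnodup.sublist (List.take_sublist _ _), fun i hi => ?_⟩
  · rwa [List.head?_take, if_neg (by omega)]
  · rw [List.getLast?_eq_getElem?, hlen, Nat.add_sub_cancel, List.getElem?_take, if_pos (by omega),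
      List.getElem?_eq_getElem hj, List.getD_eq_getElem _ _ hj]
  · rw [hlen] at hi
    rw [hgetD i (by omega), hgetD (i + 1) (by omega)]
    exact hedges i (by omega)

theorem AltPath.concat (h : g.AltPath p b u) (he : Even (p.length - 1)) (hadj : g.adj u w)
    (hm : ¬ g.M u w) (hw : w ∉ p) : g.AltPath (p ++ [w]) b w := by
  have hlast := h.getD_length_sub_one
  obtain ⟨hhead, -, hnodup, hedges⟩ := h
  have hpos : 0 < p.length := List.length_pos_iff.2 (by rintro rfl; simp at hhead)
  have hgetD : ∀ i, i < p.length → (p ++ [w]).getD i b = p.getD i b := fun i hi => by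
    rw [List.getD_eq_getElem?_getD, List.getD_eq_getElem?_getD, List.getElem?_append_left hi]
  have hgetD_w : (p ++ [w]).getD p.length b = w := by simp [List.getD_eq_getElem?_getD]
  refine ⟨?_, List.getLast?_concat, ?_, fun i hi => ?_⟩
  · rwa [List.head?_append, Option.or_of_isSome (by simp [hhead])]
  · exact List.nodup_append.2 ⟨hnodup, List.nodup_singleton w,
      fun x hx y hy hxy => hw (by rw [List.mem_singleton.1 hy] at hxy; exact hxy ▸ hx)⟩
  · rw [List.length_append, List.length_singleton] at hi
    rcases Nat.lt_succ_iff_lt_or_eq.1 hi with hi | hi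
    · rw [hgetD i (by omega), hgetD (i + 1) hi]
      exact hedges i hi
    · obtain rfl : i = p.length - 1 := by omega
      rw [hgetD _ (by omega), Nat.sub_add_cancel hpos, hgetD_w, hlast]
      exact ⟨hadj, iff_of_false hm (by rw [Nat.even_iff] at he; omega)⟩

theorem evenlevel_le (h : g.AltPathFrom p f v) (he : Even (p.length - 1)) :
    g.evenlevel v ≤ ((p.length - 1 : ℕ) : ℕ∞) :=
  sInf_le ⟨p, f, h, he, rfl⟩

theorem oddlevel_le (h : g.AltPathFrom p f v) (ho : Odd (p.length - 1)) :
    g.oddlevel v ≤ ((p.length - 1 : ℕ) : ℕ∞) :=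
  sInf_le ⟨p, f, h, ho, rfl⟩

theorem exists_isEvenlevelPath (h : g.evenlevel v ≠ ⊤) : ∃ p f, g.IsEvenlevelPath p f v := by
  have hne : {n : ℕ∞ | ∃ p f, g.AltPathFrom p f v ∧ Even (p.length - 1) ∧
      n = ((p.length - 1 : ℕ) : ℕ∞)}.Nonempty := by
    by_contra hc
    rw [Set.not_nonempty_iff_eq_empty] at hc
    exact h (by rw [evenlevel, hc, sInf_empty])
  obtain ⟨p, f, hp, he, hlen⟩ := csInf_mem hne
  exact ⟨p, f, hp, he, hlen.symm⟩

theorem IsOuter.evenlevel_le_of_getD (hv : g.IsOuter v) (h : g.AltPathFrom p f w) {j : ℕ}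
    (hj : j < p.length) (hjv : p.getD j f = v) : g.evenlevel v ≤ j := by
  have hprefix : g.AltPathFrom (p.take (j + 1)) f v := ⟨h.1, hjv ▸ h.2.take hj⟩
  have hlen : (p.take (j + 1)).length - 1 = j := by rw [List.length_take]; omega
  rcases Nat.even_or_odd j with hje | hjo
  · have hle := evenlevel_le hprefix (by rwa [hlen])
    rwa [hlen] at hle
  · have hle := oddlevel_le hprefix (by rwa [hlen])
    rw [hlen] at hle
    exact hv.le.trans hle

theorem IsOuter.evenlevel_lt_of_mem (hv : g.IsOuter v) (hp : g.IsEvenlevelPath p f u)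
    (hvp : v ∈ p) (hvu : v ≠ u) : g.evenlevel v < g.evenlevel u := by
  obtain ⟨j, hj, rfl⟩ := List.mem_iff_getElem.1 hvp
  have hjv : p.getD j f = p[j] := List.getD_eq_getElem _ _ hj
  have hj_last : j ≠ p.length - 1 := by
    rintro rfl
    exact hvu (hjv ▸ hp.1.2.getD_length_sub_one)
  calc g.evenlevel p[j] ≤ j := hv.evenlevel_le_of_getD hp.1 hj hjv
    _ < ((p.length - 1 : ℕ) : ℕ∞) := by exact_mod_cast (show j < p.length - 1 by omega)
    _ = g.evenlevel u := hp.2.2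

theorem oddlevel_le_of_isEvenlevelPath (hp : g.IsEvenlevelPath p f u) (hadj : g.adj u v)
    (hm : ¬ g.M u v) (hvp : v ∉ p) : g.oddlevel v ≤ g.evenlevel u + 1 := by
  obtain ⟨⟨hf, hpath⟩, he, hlen⟩ := hp
  have hpos : 0 < p.length := List.length_pos_iff.2 (by rintro rfl; simp [AltPath] at hpath)
  have hqlen : (p ++ [v]).length - 1 = (p.length - 1) + 1 := by simp; omega
  have hqodd : Odd ((p ++ [v]).length - 1) := hqlen ▸ he.add_one
  calc g.oddlevel v ≤ (((p ++ [v]).length - 1 : ℕ) : ℕ∞) :=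
        oddlevel_le ⟨hf, hpath.concat he hadj hm hvp⟩ hqodd
    _ = g.evenlevel u + 1 := by rw [hqlen, Nat.cast_add, Nat.cast_one, hlen]

theorem IsOuter.evenlevel_le_of_adj (hv : g.IsOuter v) (hadj : g.adj u v) (hm : ¬ g.M u v) :
    g.evenlevel v ≤ g.evenlevel u := by
  by_cases htop : g.evenlevel u = ⊤
  · exact htop ▸ le_top
  obtain ⟨p, f, hp⟩ := exists_isEvenlevelPath htop
  by_cases hvp : v ∈ p
  · exact (hv.evenlevel_lt_of_mem hp hvp fun h => g.loopless u (h ▸ hadj)).le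
  · exact (ENat.lt_add_one_iff htop).1
      (hv.trans_le (oddlevel_le_of_isEvenlevelPath hp hadj hm hvp))

theorem IsOuter.oddlevel_eq_of_adj (hv : g.IsOuter v) (hadj : g.adj u v) (hm : ¬ g.M u v)
    (he : g.evenlevel u = g.evenlevel v) : g.oddlevel v = g.evenlevel u + 1 := by
  have htop : g.evenlevel u ≠ ⊤ := he ▸ hv.ne_top
  obtain ⟨p, f, hp⟩ := exists_isEvenlevelPath htop
  have hvp : v ∉ p := fun hvp =>
    (hv.evenlevel_lt_of_mem hp hvp fun h => g.loopless u (h ▸ hadj)).ne he.symm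
  exact le_antisymm (oddlevel_le_of_isEvenlevelPath hp hadj hm hvp)
    ((ENat.add_one_le_iff htop).2 (he ▸ hv))

end MatchedGraph

theorem outer_outer_unmatched_bridge_general (g : MatchedGraph V) (u v : V)
    (hm : ¬ g.M u v) (hb : g.IsBridge u v)
    (hu : g.IsOuter u) (hv : g.IsOuter v) :
    g.evenlevel u = g.evenlevel v ∧ g.tenacity u = g.tenacity v ∧
      g.tenacity v = g.etenacity u v := by
  have hadj : g.adj u v := hb.1
  have hadj' : g.adj v u := g.symm u v hadj
  have hm' : ¬ g.M v u := fun h => hm (g.M_symm v u h)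
  have he : g.evenlevel u = g.evenlevel v :=
    le_antisymm (hu.evenlevel_le_of_adj hadj' hm') (hv.evenlevel_le_of_adj hadj hm)
  have hov := hv.oddlevel_eq_of_adj hadj hm he
  have hou := hu.oddlevel_eq_of_adj hadj' hm' he.symm
  refine ⟨he, ?_, ?_⟩
  · rw [MatchedGraph.tenacity, MatchedGraph.tenacity, hou, hov, he]
  · rw [MatchedGraph.tenacity, hov, MatchedGraph.etenacity, if_neg hm, he, add_assoc]

/-- Let `(u, v)` be an unmatched bridge with
`tenacity(u, v) ≤ l_m` whose endpoints are both outer. Then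
`evenlevel(u) = evenlevel(v)` and `tenacity(u) = tenacity(v) = tenacity(u, v)`. -/
theorem outer_outer_unmatched_bridge (g : MatchedGraph V) (u v : V)
    (hm : ¬ g.M u v) (hb : g.IsBridge u v) (ht : g.etenacity u v ≤ g.lm)
    (hu : g.IsOuter u) (hv : g.IsOuter v) :
    g.evenlevel u = g.evenlevel v ∧ g.tenacity u = g.tenacity v ∧
      g.tenacity v = g.etenacity u v :=
  outer_outer_unmatched_bridge_general g u v hm hb hu hv
end

section
/- Let B_{b,t} and B_{b',t'} be two blossoms such that b belongs to B_{b',t'}. Then B_{b,t} is a proper subset of B_{b',t'}. -/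
open scoped Classical

universe u

variable {V : Type u}

/-! Unfold `B_{b',t'}` along its recursive definition down to a sub-blossom `B_{c,s+2}` with
`b ∈ S_{c,s+2}`. Then `t < tenacity b = s + 2` and `t ≡ s (mod 2)`, so `t ≤ s`; and since `b` is
outer, each `B_{b,r}` is part of `B_{b,r+2}`, giving `B_{b,t} ⊆ B_{b,s} ⊆ B_{c,s+2}`. The
inclusion is proper because `b ∈ B_{b',t'}`, whereas every vertex of `B_{b,t}` has tenacity at
most `t`. -/

namespace MatchedGraph

variable (g : MatchedGraph V)

lemma mem_blossom_add_two {t : ℕ} {b w : V} :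
    w ∈ g.blossom (t + 2) b ↔ w ∈ g.Sset (t + 2) b ∨
      ∃ v, ((v ∈ g.Sset (t + 2) b ∨ v = b) ∧ g.IsOuter v) ∧ w ∈ g.blossom t v := by
  simp only [blossom, Set.mem_union, Set.mem_iUnion, Set.mem_ofPred_eq, exists_prop]

lemma blossom_subset_blossom_add_two {t : ℕ} {b v : V} (hv : v ∈ g.Sset (t + 2) b ∨ v = b)
    (hvo : g.IsOuter v) : g.blossom t v ⊆ g.blossom (t + 2) b :=
  fun _ hw => g.mem_blossom_add_two.mpr (Or.inr ⟨v, ⟨hv, hvo⟩, hw⟩)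

lemma blossom_mono {b : V} (hb : g.IsOuter b) {t s : ℕ} (hts : t ≤ s)
    (hpar : t % 2 = s % 2) : g.blossom t b ⊆ g.blossom s b := by
  obtain ⟨k, rfl⟩ : ∃ k, s = t + 2 * k := ⟨(s - t) / 2, by omega⟩
  induction k with
  | zero => rfl
  | succ k ih =>
    exact (ih (by omega) (by omega)).trans
      (g.blossom_subset_blossom_add_two (Or.inr rfl) hb)

lemma tenacity_le_of_mem_blossom {t : ℕ} {b w : V} (hw : w ∈ g.blossom t b) :
    g.tenacity w ≤ t := by
  induction t, b using blossom.induct with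
  | case1 => simp [blossom] at hw
  | case2 => simp [blossom] at hw
  | case3 t b ih =>
    rcases g.mem_blossom_add_two.mp hw with hS | ⟨v, -, hwv⟩
    · exact hS.1.le
    · exact (ih v hwv).trans (by exact_mod_cast Nat.le_add_right t 2)

lemma notMem_blossom_of_lt_tenacity {t : ℕ} {b w : V} (hw : (t : ℕ∞) < g.tenacity w) :
    w ∉ g.blossom t b :=
  fun hmem => (g.tenacity_le_of_mem_blossom hmem).not_gt hw

lemma blossom_subset_of_mem {t t' : ℕ} {b b' : V} (hpar : t % 2 = t' % 2)
    (houter : g.IsOuter b) (htb : (t : ℕ∞) < g.tenacity b) (hb : b ∈ g.blossom t' b') :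
    g.blossom t b ⊆ g.blossom t' b' := by
  induction t', b' using blossom.induct with
  | case1 => simp [blossom] at hb
  | case2 => simp [blossom] at hb
  | case3 s b' ih =>
    rcases g.mem_blossom_add_two.mp hb with hS | ⟨v, ⟨hv, hvo⟩, hbv⟩
    · have hts : t < s + 2 := by exact_mod_cast hS.1 ▸ htb
      exact (g.blossom_mono houter (by omega) (by omega)).trans
        (g.blossom_subset_blossom_add_two (Or.inl hS) houter)
    · exact (ih v (by omega) hbv).trans (g.blossom_subset_blossom_add_two hv hvo)

end MatchedGraph

theorem blossom_ssubset_of_base_mem_general (g : MatchedGraph V) (b b' : V) (t t' : ℕ)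
    (hodd : Odd t) (hodd' : Odd t')
    (houter : g.IsOuter b) (htb : (t : ℕ∞) < g.tenacity b)
    (hb : b ∈ g.blossom t' b') :
    g.blossom t b ⊂ g.blossom t' b' := by
  have hpar : t % 2 = t' % 2 := by rw [Nat.odd_iff.mp hodd, Nat.odd_iff.mp hodd']
  exact ⟨g.blossom_subset_of_mem hpar houter htb hb,
    fun hsub => g.notMem_blossom_of_lt_tenacity htb (hsub hb)⟩

/-- If `b ∈ B_{b',t'}`, then `B_{b,t}` is a proper subset of
`B_{b',t'}`. -/
theorem blossom_ssubset_of_base_mem (g : MatchedGraph V) (b b' : V) (t t' : ℕ)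
    (hodd : Odd t) (hodd' : Odd t')
    (houter : g.IsOuter b) (htb : (t : ℕ∞) < g.tenacity b)
    (houter' : g.IsOuter b') (htb' : (t' : ℕ∞) < g.tenacity b')
    (htlm : (t : ℕ∞) < g.lm) (ht'lm : (t' : ℕ∞) < g.lm)
    (hclaim : ∀ w, g.tenacity w ≤ ((max t t' : ℕ) : ℕ∞) → ∃ c, g.baseOf w c)
    (hb : b ∈ g.blossom t' b') :
    g.blossom t b ⊂ g.blossom t' b' :=
  blossom_ssubset_of_base_mem_general g b b' t t' hodd hodd' houter htb hb
end
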